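/- For the hyperlogarithm generalization H, if x = ∞ then H(a₀ | a₁,...,a_n ‖ ∞ | a_{n+1}) equals the standard hyperlogarithm I(a₀ | a₁,...,a_n | a_{n+1}); and for finite x (distinct from all a_i and the endpoints), H(a₀ | a₁,...,a_n ‖ x | a_{n+1}) = I(1/(a₀−x) | 1/(a₁−x), ..., 1/(a_n−x) | 1/(a_{n+1}−x)). -/

import Mathlib

/-! The Möbius substitution `z = 1/(w - x)` sends `x` to `∞` and each `a` to `1/(a - x)`, and it
pulls the form `dz/(z - 1/(a - x))` back to `ω(a, x)`, because
`1/(w - x) - 1/(a - x) = (a - w)/((w - x)(a - x))` and `dz = -dw/(w - x)²`.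
Chen iterated integrals depend only on the integrands `f(γ u) γ'(u)`, so integrating the forms
`dz/(z - 1/(a - x))` along `u ↦ 1/(γ u - x)` gives the same value as integrating the `ω(a, x)`
along `γ`. -/

open MeasureTheory intervalIntegral

/-- Chen iterated integral `∫ η₁ ∘ ⋯ ∘ η_n` along the path `γ` (restricted to `[0, t]`),
where the list gives the forms `f(z) dz` in reverse order (head = outermost form `η_n`),
defined by the recursion
`∫_γ η₁∘⋯∘η_n = ∫_0^t (∫_{γ|[0,u]} η₁∘⋯∘η_{n-1}) · η_n(γ(u)) γ'(u) du`. -/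
noncomputable def iterInt (γ : ℝ → ℂ) : List (ℂ → ℂ) → ℝ → ℂ
  | [], _ => 1
  | f :: fs, t => ∫ u in (0 : ℝ)..t, iterInt γ fs u * (f (γ u) * deriv γ u)

/-- The differential form `ω(a, x)` of the generalised hyperlogarithm, with `x = none`
encoding `x = ∞` (where `ω(a, ∞)(t) = 1/(t − a)` is the standard hyperlogarithm form). -/
noncomputable def omegaG (a : ℂ) : Option ℂ → ℂ → ℂ
  | none => fun t => 1 / (t - a)
  | some x => fun t => (a - x) / ((t - a) * (t - x))

/-- Dan's generalised hyperlogarithm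
`H(a₀ | a₁,…,a_n ‖ x | a_{n+1}) = ∫_{a₀}^{a_{n+1}} ω(a₁,x)∘⋯∘ω(a_n,x)`
along a path `γ` from `a₀` to `a_{n+1}`. -/
noncomputable def hyperH (γ : ℝ → ℂ) (as : List ℂ) (x : Option ℂ) : ℂ :=
  iterInt γ (as.map (fun a => omegaG a x)) 1

/-- The standard hyperlogarithm `I(a₀ | a₁,…,a_n | a_{n+1})` along a path `γ`. -/
noncomputable def hyperI (γ : ℝ → ℂ) (as : List ℂ) : ℂ :=
  iterInt γ (as.map (fun a => fun t => 1 / (t - a))) 1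

theorem iterInt_eq_of_forall₂ {γ δ : ℝ → ℂ} {fs gs : List (ℂ → ℂ)} {t : ℝ}
    (h : List.Forall₂
      (fun f g => ∀ u ∈ Set.uIcc 0 t, f (δ u) * deriv δ u = g (γ u) * deriv γ u) fs gs) :
    iterInt δ fs t = iterInt γ gs t := by
  induction fs generalizing gs t with
  | nil => rw [List.forall₂_nil_left_iff.mp h]; rfl
  | cons f fs ih =>
    obtain ⟨g, gs, hfg, hfgs, rfl⟩ := List.forall₂_cons_left_iff.mp h
    refine intervalIntegral.integral_congr fun u hu => ?_
    have hsub : Set.uIcc 0 u ⊆ Set.uIcc 0 t := Set.uIcc_subset_uIcc_left hu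
    rw [ih (hfgs.imp fun _ _ hfg v hv => hfg v (hsub hv)), hfg u hu]

theorem deriv_one_div_sub_const {γ : ℝ → ℂ} {x : ℂ} {u : ℝ} (hγ : DifferentiableAt ℝ γ u)
    (hu : γ u ≠ x) : deriv (fun v => 1 / (γ v - x)) u = -deriv γ u / (γ u - x) ^ 2 := by
  simp only [one_div]
  exact ((hγ.hasDerivAt.sub_const x).inv (sub_ne_zero.mpr hu)).deriv

theorem omegaG_some_eq_pullback {a x w : ℂ} (ha : a ≠ x) (hw : w ≠ x) (d : ℂ) :
    1 / (1 / (w - x) - 1 / (a - x)) * (-d / (w - x) ^ 2) = omegaG a (some x) w * d := by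
  rcases eq_or_ne w a with rfl | hwa
  · simp [omegaG] -- both sides are `0`, through `1 / 0 = 0`
  have hwx : w - x ≠ 0 := sub_ne_zero.mpr hw
  have hax : a - x ≠ 0 := sub_ne_zero.mpr ha
  have hden : 1 / (w - x) - 1 / (a - x) = (a - w) / ((w - x) * (a - x)) := by
    field_simp
    ring
  rw [hden, one_div_div, omegaG, div_mul_div_comm, div_mul_eq_mul_div,
    div_eq_div_iff (mul_ne_zero (sub_ne_zero.mpr hwa.symm) (pow_ne_zero 2 hwx))
      (mul_ne_zero (sub_ne_zero.mpr hwa) hwx)]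
  ring

theorem hyperH_none (γ : ℝ → ℂ) (as : List ℂ) : hyperH γ as none = hyperI γ as := rfl

theorem hyperH_some_eq_hyperI {γ : ℝ → ℂ} {x : ℂ} {as : List ℂ}
    (hγ : ∀ u ∈ Set.Icc 0 1, DifferentiableAt ℝ γ u) (hγx : ∀ u ∈ Set.Icc 0 1, γ u ≠ x)
    (has : ∀ a ∈ as, a ≠ x) :
    hyperH γ as (some x) = hyperI (fun u => 1 / (γ u - x)) (as.map fun a => 1 / (a - x)) := by
  rw [hyperH, hyperI, List.map_map]
  refine (iterInt_eq_of_forall₂ ?_).symm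
  rw [List.forall₂_map_left_iff, List.forall₂_map_right_iff, List.forall₂_same]
  intro a ha u hu
  rw [Set.uIcc_of_le zero_le_one] at hu
  rw [Function.comp_apply, deriv_one_div_sub_const (hγ u hu) (hγx u hu)]
  exact omegaG_some_eq_pullback (has a ha) (hγx u hu) _

/-- If `x = ∞` then `H(a₀ | a₁,…,a_n ‖ ∞ | a_{n+1}) = I(a₀ | a₁,…,a_n | a_{n+1})`; and for
finite `x` distinct from all the `a_i`,
`H(a₀ | a₁,…,a_n ‖ x | a_{n+1}) = I(1/(a₀−x) | 1/(a₁−x),…,1/(a_n−x) | 1/(a_{n+1}−x))`,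
the latter computed along the transformed path `u ↦ 1/(γ(u) − x)`.  Here
`γ : [0,1] → ℂ` is a `C¹` path from `a₀` to `a_{n+1}` avoiding `a₁, …, a_n` (in its
interior) and avoiding `x`, with the convergence conditions `a₀ ∉ {a₁, x}`,
`a_{n+1} ∉ {a_n, x}`. -/
theorem hyperH_eq_hyperI (n : ℕ) (a : Fin (n + 2) → ℂ) (x : ℂ) (γ : ℝ → ℂ)
    (hγ : ContDiff ℝ 1 γ)
    (hx : ∀ i, a i ≠ x)
    (hγx : ∀ u ∈ Set.Icc (0 : ℝ) 1, γ u ≠ x) :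
    (hyperH γ ((List.finRange n).map (fun i => a i.succ.castSucc)) none
        = hyperI γ ((List.finRange n).map (fun i => a i.succ.castSucc))) ∧
    (hyperH γ ((List.finRange n).map (fun i => a i.succ.castSucc)) (some x)
        = hyperI (fun u => 1 / (γ u - x))
            ((List.finRange n).map (fun i => 1 / (a i.succ.castSucc - x)))) := by
  refine ⟨hyperH_none _ _, ?_⟩
  rw [hyperH_some_eq_hyperI (fun u _ => (hγ.differentiable one_ne_zero).differentiableAt) hγx
    (List.forall_mem_map.mpr fun i _ => hx _), List.map_map]
  rfl
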